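/- arXiv:2101.00538 — 4 statements merged into one kernel-verified Lean document; each statement's English description precedes it below -/
import Mathlib

section
/- Let 0 < r ≤ π/2 and let X be a nonempty closed subset of S^d with diam_s(X) ≤ r. Then diam_s((X^r)^r) ≤ r. -/
open scoped RealInnerProductSpace
open Real

/-- Spherical (geodesic) distance between unit vectors. -/
noncomputable def sdist {n : ℕ} (x y : EuclideanSpace ℝ (Fin n)) : ℝ :=
  Real.arccos ⟪x, y⟫

/-- The unit sphere in `ℝⁿ`. -/
def usphere (n : ℕ) : Set (EuclideanSpace ℝ (Fin n)) := {x | ‖x‖ = 1}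

/-- Spherical diameter of a set. -/
noncomputable def sdiam {n : ℕ} (X : Set (EuclideanSpace ℝ (Fin n))) : ℝ :=
  sSup {δ | ∃ x ∈ X, ∃ y ∈ X, δ = sdist x y}

/-- Closed spherical ball of center `c` and radius `ρ`. -/
def sball {n : ℕ} (c : EuclideanSpace ℝ (Fin n)) (ρ : ℝ) : Set (EuclideanSpace ℝ (Fin n)) :=
  {y | ‖y‖ = 1 ∧ sdist c y ≤ ρ}

/-- The `r`-dual set `X^r` of `X`: points of the sphere within spherical
distance `r` of every point of `X`. -/
def sdual {n : ℕ} (r : ℝ) (X : Set (EuclideanSpace ℝ (Fin n))) :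
    Set (EuclideanSpace ℝ (Fin n)) :=
  {y | ‖y‖ = 1 ∧ ∀ x ∈ X, sdist x y ≤ r}

/-- The shortest geodesic arc between two (non-antipodal) unit vectors:
normalized nonnegative combinations. -/
def geoArc {n : ℕ} (a b : EuclideanSpace ℝ (Fin n)) :
    Set (EuclideanSpace ℝ (Fin n)) :=
  {z | ‖z‖ = 1 ∧ ∃ s t : ℝ, 0 ≤ s ∧ 0 ≤ t ∧ 0 < s + t ∧
    ∃ k : ℝ, 0 < k ∧ z = k • (s • a + t • b)}

/-- Spherical convexity. -/
def SphConvex {n : ℕ} (Q : Set (EuclideanSpace ℝ (Fin n))) : Prop :=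
  Q ⊆ usphere n ∧ (∀ x ∈ Q, -x ∉ Q) ∧ ∀ x ∈ Q, ∀ y ∈ Q, geoArc x y ⊆ Q

/-- Minimal spherical width: infimum of widths of lunes containing `K`. -/
noncomputable def swidth {n : ℕ} (K : Set (EuclideanSpace ℝ (Fin n))) : ℝ :=
  sInf {w | ∃ c₁ c₂ : EuclideanSpace ℝ (Fin n), ‖c₁‖ = 1 ∧ ‖c₂‖ = 1 ∧
    c₁ ≠ c₂ ∧ c₁ ≠ -c₂ ∧ K ⊆ sball c₁ (π / 2) ∩ sball c₂ (π / 2) ∧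
    w = π - sdist c₁ c₂}


theorem sdiam_rdual_rdual_le (d : ℕ) (r : ℝ) (hr : 0 < r) (hr2 : r ≤ π / 2)
    (X : Set (EuclideanSpace ℝ (Fin (d + 1)))) (hX : X.Nonempty)
    (hXc : IsClosed X) (hXs : X ⊆ usphere (d + 1)) (hdiam : sdiam X ≤ r) :
    sdiam (sdual r (sdual r X)) ≤ r := by
  have key : ∀ x ∈ X, ∀ w ∈ X, sdist x w ≤ r := by
    intro x hx w hw
    have hmem : sdist x w ∈ {δ | ∃ a ∈ X, ∃ b ∈ X, δ = sdist a b} :=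
      ⟨x, hx, w, hw, rfl⟩
    have hbdd : BddAbove {δ | ∃ a ∈ X, ∃ b ∈ X, δ = sdist a b} :=
      ⟨π, by rintro δ ⟨a, -, b, -, rfl⟩; exact Real.arccos_le_pi _⟩
    exact le_trans (le_csSup hbdd hmem) hdiam
  have hXsub : X ⊆ sdual r X := fun x hx => ⟨hXs hx, fun w hw => key w hw x hx⟩
  apply Real.sSup_le _ hr.le
  rintro δ ⟨y, hy, z, hz, rfl⟩
  have hzX : z ∈ sdual r X := ⟨hz.1, fun x hx => hz.2 x (hXsub hx)⟩
  have := hy.2 z hzX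
  rwa [sdist, real_inner_comm] at this
end

section
/- A closed set Y ⊂ S^d that is complete (i.e., adding any point strictly increases its spherical diameter) with diam_s(Y) ≤ π/2 satisfies Y = Y^{diam_s(Y)}, i.e., Y equals the set of points at spherical distance at most diam_s(Y) from every point of Y; in particular Y is a convex body of constant width diam_s(Y). -/
open scoped RealInnerProductSpace
open Real

section SphericalDiameter

variable {n : ℕ}

lemma sdist_self {x : EuclideanSpace ℝ (Fin n)} (hx : ‖x‖ = 1) : sdist x x = 0 := by
  simp [sdist, hx]

lemma sdist_comm (x y : EuclideanSpace ℝ (Fin n)) : sdist x y = sdist y x := by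
  rw [sdist, sdist, real_inner_comm]

lemma sdist_le_sdiam {X : Set (EuclideanSpace ℝ (Fin n))} {x y : EuclideanSpace ℝ (Fin n)}
    (hx : x ∈ X) (hy : y ∈ X) : sdist x y ≤ sdiam X :=
  le_csSup ⟨π, fun _ ⟨_, _, _, _, hδ⟩ => hδ ▸ arccos_le_pi _⟩ ⟨x, hx, y, hy, rfl⟩

lemma sdiam_nonneg {X : Set (EuclideanSpace ℝ (Fin n))} (hX : X.Nonempty)
    (hXs : X ⊆ usphere n) : 0 ≤ sdiam X := by
  obtain ⟨x, hx⟩ := hX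
  exact sdist_self (hXs hx) ▸ sdist_le_sdiam hx hx

lemma subset_sdual_sdiam {X : Set (EuclideanSpace ℝ (Fin n))} (hXs : X ⊆ usphere n) :
    X ⊆ sdual (sdiam X) X :=
  fun _ hy => ⟨hXs hy, fun _ hx => sdist_le_sdiam hx hy⟩

lemma sdiam_union_singleton_le_of_mem_sdual {X : Set (EuclideanSpace ℝ (Fin n))}
    (hX : X.Nonempty) (hXs : X ⊆ usphere n) {z : EuclideanSpace ℝ (Fin n)}
    (hz : z ∈ sdual (sdiam X) X) : sdiam (X ∪ {z}) ≤ sdiam X := by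
  obtain ⟨hz1, hzX⟩ := hz
  refine csSup_le ⟨_, z, Or.inr rfl, z, Or.inr rfl, rfl⟩ ?_
  rintro _ ⟨a, ha | rfl, b, hb | rfl, rfl⟩
  · exact sdist_le_sdiam ha hb
  · exact hzX a ha
  · exact sdist_comm a b ▸ hzX b hb
  · exact sdist_self hz1 ▸ sdiam_nonneg hX hXs

end SphericalDiameter

theorem complete_eq_dual_general (d : ℕ) (Y : Set (EuclideanSpace ℝ (Fin (d + 1))))
    (hYne : Y.Nonempty) (hYs : Y ⊆ usphere (d + 1))
    (hcomplete : ∀ y, ‖y‖ = 1 → y ∉ Y → sdiam Y < sdiam (Y ∪ {y})) :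
    Y = sdual (sdiam Y) Y := by
  refine (subset_sdual_sdiam hYs).antisymm fun z hz => ?_
  by_contra hzY
  exact (hcomplete z hz.1 hzY).not_ge (sdiam_union_singleton_le_of_mem_sdual hYne hYs hz)

theorem complete_eq_dual (d : ℕ) (Y : Set (EuclideanSpace ℝ (Fin (d + 1))))
    (hYne : Y.Nonempty) (hYc : IsClosed Y) (hYs : Y ⊆ usphere (d + 1))
    (hcomplete : ∀ y, ‖y‖ = 1 → y ∉ Y → sdiam Y < sdiam (Y ∪ {y}))
    (hdiam : sdiam Y ≤ π / 2) :
    Y = sdual (sdiam Y) Y :=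
  complete_eq_dual_general d Y hYne hYs hcomplete
end

section
/- Every set X ⊂ S^d of spherical diameter δ ∈ (0, π) is contained in a complete set Y ⊂ S^d of spherical diameter δ. -/
open scoped RealInnerProductSpace
open Real

lemma sdist_symm {n : ℕ} (a b : EuclideanSpace ℝ (Fin n)) : sdist a b = sdist b a := by
  rw [sdist, sdist, real_inner_comm]

lemma sdist_closure_le {n : ℕ} {M : Set (EuclideanSpace ℝ (Fin n))} {δ : ℝ}
    (h : ∀ a ∈ M, ∀ b ∈ M, sdist a b ≤ δ) :
    ∀ a ∈ closure M, ∀ b ∈ closure M, sdist a b ≤ δ := by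
  have key : ∀ (c : EuclideanSpace ℝ (Fin n)) (A : Set (EuclideanSpace ℝ (Fin n))),
      (∀ a ∈ A, sdist a c ≤ δ) → ∀ a ∈ closure A, sdist a c ≤ δ := by
    intro c A hA a ha
    have hcont : Continuous fun x : EuclideanSpace ℝ (Fin n) => sdist x c :=
      Real.continuous_arccos.comp (continuous_id.inner continuous_const)
    have hC : IsClosed {x : EuclideanSpace ℝ (Fin n) | sdist x c ≤ δ} :=
      isClosed_le hcont continuous_const
    exact closure_minimal hA hC ha
  intro a ha b hb
  have claim1 : ∀ m ∈ M, sdist m a ≤ δ := by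
    intro m hm
    rw [sdist_symm]
    exact key m M (fun p hp => h p hp m hm) a ha
  rw [sdist_symm]
  exact key a M claim1 b hb

theorem exists_complete_superset (d : ℕ) (δ : ℝ) (hδ : 0 < δ) (hδπ : δ < π)
    (X : Set (EuclideanSpace ℝ (Fin (d + 1))))
    (hXs : X ⊆ usphere (d + 1)) (hdiam : sdiam X = δ) :
    ∃ Y : Set (EuclideanSpace ℝ (Fin (d + 1))), IsClosed Y ∧ X ⊆ Y ∧
      Y ⊆ usphere (d + 1) ∧ sdiam Y = δ ∧
      ∀ y, ‖y‖ = 1 → y ∉ Y → sdiam Y < sdiam (Y ∪ {y}) := by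
  classical
  have hbdd : ∀ Y : Set (EuclideanSpace ℝ (Fin (d + 1))),
      BddAbove {δ | ∃ x ∈ Y, ∃ y ∈ Y, δ = sdist x y} := by
    intro Y
    refine ⟨π, ?_⟩
    rintro t ⟨x, hx, y, hy, rfl⟩
    exact Real.arccos_le_pi _
  have hle : ∀ (Y : Set (EuclideanSpace ℝ (Fin (d + 1))))
      (a b : EuclideanSpace ℝ (Fin (d + 1))), a ∈ Y → b ∈ Y → sdist a b ≤ sdiam Y := by
    intro Y a b ha hb
    exact le_csSup (hbdd Y) ⟨a, ha, b, hb, rfl⟩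
  have hXne : X.Nonempty := by
    by_contra h
    rw [Set.not_nonempty_iff_eq_empty] at h
    have h0 : {t | ∃ x ∈ X, ∃ y ∈ X, t = sdist x y} = ∅ := by
      ext t; simp [h]
    have : sdiam X = 0 := by rw [sdiam, h0, Real.sSup_empty]
    rw [hdiam] at this
    exact absurd this hδ.ne'
  have hmono : ∀ A B : Set (EuclideanSpace ℝ (Fin (d + 1))),
      A.Nonempty → A ⊆ B → sdiam A ≤ sdiam B := by
    intro A B ⟨a, ha⟩ hAB
    exact csSup_le_csSup (hbdd B) ⟨sdist a a, a, ha, a, ha, rfl⟩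
      (by rintro t ⟨x, hx, y, hy, rfl⟩; exact ⟨x, hAB hx, y, hAB hy, rfl⟩)
  set S : Set (Set (EuclideanSpace ℝ (Fin (d + 1)))) := {Y | X ⊆ Y ∧ Y ⊆ usphere (d + 1) ∧
    ∀ a ∈ Y, ∀ b ∈ Y, sdist a b ≤ δ} with hS
  have hXS : X ∈ S := by
    refine ⟨le_refl X, hXs, fun a ha b hb => ?_⟩
    rw [← hdiam]; exact hle X a b ha hb
  have hchainub : ∀ c ⊆ S, IsChain (· ⊆ ·) c → c.Nonempty →
      ∃ ub ∈ S, ∀ s ∈ c, s ⊆ ub := by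
    intro c hcS hchain hcne
    refine ⟨⋃₀ c, ⟨?_, ?_, ?_⟩, fun s hs => Set.subset_sUnion_of_mem hs⟩
    · obtain ⟨s, hs⟩ := hcne
      exact (hcS hs).1.trans (Set.subset_sUnion_of_mem hs)
    · rintro z ⟨s, hs, hz⟩
      exact (hcS hs).2.1 hz
    · rintro a ⟨s, hs, ha⟩ b ⟨t, ht, hb⟩
      rcases hchain.total hs ht with hst | hst
      · exact (hcS ht).2.2 a (hst ha) b hb
      · exact (hcS hs).2.2 a ha b (hst hb)
  obtain ⟨M, hXM, hMmax⟩ := zorn_subset_nonempty S hchainub X hXS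
  obtain ⟨hXM', hMs, hMp⟩ := hMmax.prop
  have hMne : M.Nonempty := hXne.mono hXM
  have hdM : sdiam M = δ := by
    refine le_antisymm ?_ ?_
    · refine Real.sSup_le ?_ hδ.le
      rintro t ⟨x, hx, y, hy, rfl⟩
      exact hMp x hx y hy
    · rw [← hdiam]; exact hmono X M hXne hXM
  have hMclosed : IsClosed M := by
    have hclM : closure M ∈ S := by
      refine ⟨hXM.trans subset_closure, ?_, sdist_closure_le hMp⟩
      have : IsClosed (usphere (d + 1)) :=
        isClosed_eq continuous_norm continuous_const
      exact closure_minimal hMs this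
    have := hMmax.eq_of_subset hclM subset_closure
    rw [this]; exact isClosed_closure
  refine ⟨M, hMclosed, hXM, hMs, hdM, ?_⟩
  intro y hy hyM
  have hex : ∃ a ∈ M, δ < sdist a y := by
    by_contra h
    push_neg at h
    have hMy : M ∪ {y} ∈ S := by
      refine ⟨hXM.trans Set.subset_union_left, ?_, ?_⟩
      · rintro z (hz | hz)
        · exact hMs hz
        · rw [Set.mem_singleton_iff] at hz; subst hz; exact hy
      · have hyy : sdist y y ≤ δ := by
          have h1 : ⟪y, y⟫ = (1 : ℝ) := by
            rw [real_inner_self_eq_norm_sq, hy]; norm_num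
          rw [sdist, h1, Real.arccos_one]; exact hδ.le
        rintro a (ha | ha) b (hb | hb)
        · exact hMp a ha b hb
        · rw [Set.mem_singleton_iff] at hb; subst hb; exact h a ha
        · rw [Set.mem_singleton_iff] at ha; subst ha
          rw [sdist_symm]; exact h b hb
        · rw [Set.mem_singleton_iff] at ha hb; subst ha; subst hb; exact hyy
    have := hMmax.eq_of_subset hMy Set.subset_union_left
    exact hyM (this ▸ Set.mem_union_right M rfl)
  obtain ⟨a, haM, hay⟩ := hex
  calc sdiam M = δ := hdM
    _ < sdist a y := hay
    _ ≤ sdiam (M ∪ {y}) :=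
      hle _ a y (Set.mem_union_left _ haM) (Set.mem_union_right _ rfl)
end

section
/- Let 0 < r ≤ π/2 and let Δ_2(r) ⊂ S^2 be the spherical Reuleaux triangle: the intersection of the three closed disks of spherical radius r centered at the vertices of a spherical equilateral triangle of side length r. Then Δ_2(r) is a convex body of constant width r, i.e., diam_s(Δ_2(r)) = r and Δ_2(r) = (Δ_2(r))^r. -/
open scoped RealInnerProductSpace
open Real

/-- Pairwise coordinate sums are nonnegative for a point of the Reuleaux triangle. -/
lemma reuleaux_pairsum (c x y z px py pz : ℝ) (hc0 : 0 ≤ c) (hc1 : c < 1)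
    (hx : px = x + c*y + c*z) (hy : py = c*x + y + c*z) (hz : pz = c*x + c*y + z)
    (hpx : c ≤ px) (hpy : c ≤ py) (hpzu : pz ≤ 1) : 0 ≤ x + y := by
  have e : (1-c)*((1+2*c)*(x+y)) = px + py - 2*(c*pz) := by rw [hx, hy, hz]; ring
  have h2 : 0 ≤ c*(1-pz) := mul_nonneg hc0 (by linarith)
  have h : 0 ≤ (1-c)*((1+2*c)*(x+y)) := by rw [e]; nlinarith
  rcases le_or_gt 0 (x+y) with h' | h'
  · exact h'
  · exfalso
    have : (1-c)*((1+2*c)*(x+y)) < 0 := by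
      apply mul_neg_of_pos_of_neg (by linarith)
      exact mul_neg_of_pos_of_neg (by linarith) h'
    linarith

/-- The core algebraic inequality behind constant width of the Reuleaux triangle. -/
lemma reuleaux_core_alg (c a0 a1 a2 p1 p2 p3 q1 q2 q3 : ℝ)
    (hc0 : 0 ≤ c) (hc1 : c < 1)
    (hp1d : p1 = a0 + c*a1 + c*a2)
    (hp2d : p2 = c*a0 + a1 + c*a2)
    (hp3d : p3 = c*a0 + c*a1 + a2)
    (hp1 : c ≤ p1) (hp2 : c ≤ p2) (hp3 : c ≤ p3)
    (hp1u : p1 ≤ 1) (hp2u : p2 ≤ 1) (hp3u : p3 ≤ 1)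
    (hq1 : c ≤ q1) (hq2 : c ≤ q2) (hq3 : c ≤ q3)
    (hq1u : q1 ≤ 1) (hq2u : q2 ≤ 1) (hq3u : q3 ≤ 1)
    (hnorm : a0*p1 + a1*p2 + a2*p3 = 1) :
    c ≤ a0*q1 + a1*q2 + a2*q3 := by
  have hs01 : 0 ≤ a0 + a1 :=
    reuleaux_pairsum c a0 a1 a2 p1 p2 p3 hc0 hc1 hp1d hp2d hp3d hp1 hp2 hp3u
  have hs02 : 0 ≤ a0 + a2 := by
    refine reuleaux_pairsum c a0 a2 a1 p1 p3 p2 hc0 hc1 ?_ ?_ ?_ hp1 hp3 hp2u <;>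
      [rw [hp1d]; rw [hp3d]; rw [hp2d]] <;> ring
  have hs12 : 0 ≤ a1 + a2 := by
    refine reuleaux_pairsum c a1 a2 a0 p2 p3 p1 hc0 hc1 ?_ ?_ ?_ hp2 hp3 hp1u <;>
      [rw [hp2d]; rw [hp3d]; rw [hp1d]] <;> ring
  rcases le_or_gt 0 a0 with ha0 | ha0
  · rcases le_or_gt 0 a1 with ha1 | ha1
    · rcases le_or_gt 0 a2 with ha2 | ha2
      · have m0 : a0*p1 ≤ a0*1 := mul_le_mul_of_nonneg_left hp1u ha0
        have m1 : a1*p2 ≤ a1*1 := mul_le_mul_of_nonneg_left hp2u ha1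
        have m2 : a2*p3 ≤ a2*1 := mul_le_mul_of_nonneg_left hp3u ha2
        have hsum : 1 ≤ a0 + a1 + a2 := by nlinarith
        have n0 : a0*c ≤ a0*q1 := mul_le_mul_of_nonneg_left hq1 ha0
        have n1 : a1*c ≤ a1*q2 := mul_le_mul_of_nonneg_left hq2 ha1
        have n2 : a2*c ≤ a2*q3 := mul_le_mul_of_nonneg_left hq3 ha2
        have nc : c*1 ≤ c*(a0+a1+a2) := mul_le_mul_of_nonneg_left hsum hc0
        nlinarith
      · have n0 : a0*c ≤ a0*q1 := mul_le_mul_of_nonneg_left hq1 ha0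
        have n1 : a1*c ≤ a1*q2 := mul_le_mul_of_nonneg_left hq2 ha1
        have n2 : a2*1 ≤ a2*q3 := mul_le_mul_of_nonpos_left hq3u ha2.le
        nlinarith [hp3, hp3d]
    · have ha2 : 0 ≤ a2 := by linarith
      have n0 : a0*c ≤ a0*q1 := mul_le_mul_of_nonneg_left hq1 ha0
      have n1 : a1*1 ≤ a1*q2 := mul_le_mul_of_nonpos_left hq2u ha1.le
      have n2 : a2*c ≤ a2*q3 := mul_le_mul_of_nonneg_left hq3 ha2
      nlinarith [hp2, hp2d]
  · have ha1 : 0 ≤ a1 := by linarith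
    have ha2 : 0 ≤ a2 := by linarith
    have n0 : a0*1 ≤ a0*q1 := mul_le_mul_of_nonpos_left hq1u ha0.le
    have n1 : a1*c ≤ a1*q2 := mul_le_mul_of_nonneg_left hq2 ha1
    have n2 : a2*c ≤ a2*q3 := mul_le_mul_of_nonneg_left hq3 ha2
    nlinarith [hp1, hp1d]

/-- Three unit vectors with pairwise inner product `c < 1`, `0 ≤ c`, are linearly
independent. -/
lemma reuleaux_li3 (c : ℝ) (hc0 : 0 ≤ c) (hc1 : c < 1) (v₁ v₂ v₃ : EuclideanSpace ℝ (Fin 3))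
    (h1 : ‖v₁‖ = 1) (h2 : ‖v₂‖ = 1) (h3 : ‖v₃‖ = 1)
    (g12 : ⟪v₁, v₂⟫ = c) (g13 : ⟪v₁, v₃⟫ = c) (g23 : ⟪v₂, v₃⟫ = c) :
    LinearIndependent ℝ ![v₁, v₂, v₃] := by
  have g11 : ⟪v₁, v₁⟫ = 1 := by
    rw [real_inner_self_eq_norm_mul_norm, h1]; norm_num
  have g22 : ⟪v₂, v₂⟫ = 1 := by
    rw [real_inner_self_eq_norm_mul_norm, h2]; norm_num
  have g33 : ⟪v₃, v₃⟫ = 1 := by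
    rw [real_inner_self_eq_norm_mul_norm, h3]; norm_num
  have g21 : ⟪v₂, v₁⟫ = c := by rw [real_inner_comm]; exact g12
  have g31 : ⟪v₃, v₁⟫ = c := by rw [real_inner_comm]; exact g13
  have g32 : ⟪v₃, v₂⟫ = c := by rw [real_inner_comm]; exact g23
  rw [Fintype.linearIndependent_iff]
  intro g hg
  simp only [Fin.sum_univ_three, Matrix.cons_val_zero, Matrix.cons_val_one, Matrix.head_cons,
    Matrix.cons_val_two, Matrix.tail_cons] at hg
  have h0 : ⟪g 0 • v₁ + g 1 • v₂ + g 2 • v₃, g 0 • v₁ + g 1 • v₂ + g 2 • v₃⟫ = 0 := by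
    rw [hg]; simp
  simp only [inner_add_left, inner_add_right, real_inner_smul_left, real_inner_smul_right,
    g11, g22, g33, g12, g13, g23, g21, g31, g32] at h0
  have key : (1-c) * (g 0 ^ 2 + g 1 ^ 2 + g 2 ^ 2) + c * (g 0 + g 1 + g 2)^2 = 0 := by
    rw [← h0]; ring
  have hsq : g 0 ^ 2 + g 1 ^ 2 + g 2 ^ 2 = 0 := by
    nlinarith [sq_nonneg (g 0 + g 1 + g 2), sq_nonneg (g 0), sq_nonneg (g 1), sq_nonneg (g 2)]
  have e0 : g 0 = 0 := by
    have h := le_antisymm (by linarith [sq_nonneg (g 1), sq_nonneg (g 2)]) (sq_nonneg (g 0))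
    exact sq_eq_zero_iff.mp h
  have e1 : g 1 = 0 := by
    have h := le_antisymm (by linarith [sq_nonneg (g 0), sq_nonneg (g 2)]) (sq_nonneg (g 1))
    exact sq_eq_zero_iff.mp h
  have e2 : g 2 = 0 := by
    have h := le_antisymm (by linarith [sq_nonneg (g 0), sq_nonneg (g 1)]) (sq_nonneg (g 2))
    exact sq_eq_zero_iff.mp h
  intro i
  fin_cases i
  exacts [e0, e1, e2]

/-- Three linearly independent vectors span `ℝ³`. -/
lemma reuleaux_span3 (v₁ v₂ v₃ : EuclideanSpace ℝ (Fin 3))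
    (hli : LinearIndependent ℝ ![v₁, v₂, v₃]) (z : EuclideanSpace ℝ (Fin 3)) :
    ∃ a : Fin 3 → ℝ, a 0 • v₁ + a 1 • v₂ + a 2 • v₃ = z := by
  have hcard : Fintype.card (Fin 3) = Module.finrank ℝ (EuclideanSpace ℝ (Fin 3)) := by
    simp [finrank_euclideanSpace_fin]
  let B := basisOfLinearIndependentOfCardEqFinrank hli hcard
  have hB : ⇑B = ![v₁, v₂, v₃] := coe_basisOfLinearIndependentOfCardEqFinrank hli hcard
  have hz : z ∈ Submodule.span ℝ (Set.range ![v₁, v₂, v₃]) := by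
    rw [← hB, B.span_eq]; trivial
  rw [Submodule.mem_span_range_iff_exists_fun] at hz
  obtain ⟨a, ha⟩ := hz
  refine ⟨a, ?_⟩
  simpa [Fin.sum_univ_three] using ha

/-- The key geometric inequality: any two points of the spherical Reuleaux triangle
have inner product at least `c = cos r`. -/
lemma reuleaux_key (c : ℝ) (hc0 : 0 ≤ c) (hc1 : c < 1)
    (v₁ v₂ v₃ x y : EuclideanSpace ℝ (Fin 3))
    (h1 : ‖v₁‖ = 1) (h2 : ‖v₂‖ = 1) (h3 : ‖v₃‖ = 1)
    (g12 : ⟪v₁, v₂⟫ = c) (g13 : ⟪v₁, v₃⟫ = c) (g23 : ⟪v₂, v₃⟫ = c)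
    (hx : ‖x‖ = 1) (hy : ‖y‖ = 1)
    (hp1 : c ≤ ⟪v₁, x⟫) (hp2 : c ≤ ⟪v₂, x⟫) (hp3 : c ≤ ⟪v₃, x⟫)
    (hq1 : c ≤ ⟪v₁, y⟫) (hq2 : c ≤ ⟪v₂, y⟫) (hq3 : c ≤ ⟪v₃, y⟫) :
    c ≤ ⟪x, y⟫ := by
  have g11 : ⟪v₁, v₁⟫ = 1 := by
    rw [real_inner_self_eq_norm_mul_norm, h1]; norm_num
  have g22 : ⟪v₂, v₂⟫ = 1 := by
    rw [real_inner_self_eq_norm_mul_norm, h2]; norm_num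
  have g33 : ⟪v₃, v₃⟫ = 1 := by
    rw [real_inner_self_eq_norm_mul_norm, h3]; norm_num
  have g21 : ⟪v₂, v₁⟫ = c := by rw [real_inner_comm]; exact g12
  have g31 : ⟪v₃, v₁⟫ = c := by rw [real_inner_comm]; exact g13
  have g32 : ⟪v₃, v₂⟫ = c := by rw [real_inner_comm]; exact g23
  have hli := reuleaux_li3 c hc0 hc1 v₁ v₂ v₃ h1 h2 h3 g12 g13 g23
  obtain ⟨a, ha⟩ := reuleaux_span3 v₁ v₂ v₃ hli x
  -- inner products of x with the vᵢ in coordinates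
  have hp1d : ⟪v₁, x⟫ = a 0 + c * a 1 + c * a 2 := by
    rw [← ha]
    simp only [inner_add_right, real_inner_smul_right, g11, g12, g13]
    ring
  have hp2d : ⟪v₂, x⟫ = c * a 0 + a 1 + c * a 2 := by
    rw [← ha]
    simp only [inner_add_right, real_inner_smul_right, g21, g22, g23]
    ring
  have hp3d : ⟪v₃, x⟫ = c * a 0 + c * a 1 + a 2 := by
    rw [← ha]
    simp only [inner_add_right, real_inner_smul_right, g31, g32, g33]
    ring
  -- norm of x in coordinates
  have hxx : ⟪x, x⟫ = 1 := by
    rw [real_inner_self_eq_norm_mul_norm, hx]; norm_num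
  have expand : ∀ w : EuclideanSpace ℝ (Fin 3),
      ⟪x, w⟫ = a 0 * ⟪v₁, w⟫ + a 1 * ⟪v₂, w⟫ + a 2 * ⟪v₃, w⟫ := by
    intro w
    conv_lhs => rw [← ha]
    simp only [inner_add_left, real_inner_smul_left]
  have hnorm : a 0 * ⟪v₁, x⟫ + a 1 * ⟪v₂, x⟫ + a 2 * ⟪v₃, x⟫ = 1 := by
    rw [← expand x]; exact hxx
  -- expansion of the goal
  have hxy : ⟪x, y⟫ = a 0 * ⟪v₁, y⟫ + a 1 * ⟪v₂, y⟫ + a 2 * ⟪v₃, y⟫ := expand y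
  -- upper bounds from Cauchy-Schwarz
  have hp1u : ⟪v₁, x⟫ ≤ 1 := by
    have := real_inner_le_norm v₁ x; rwa [h1, hx, one_mul] at this
  have hp2u : ⟪v₂, x⟫ ≤ 1 := by
    have := real_inner_le_norm v₂ x; rwa [h2, hx, one_mul] at this
  have hp3u : ⟪v₃, x⟫ ≤ 1 := by
    have := real_inner_le_norm v₃ x; rwa [h3, hx, one_mul] at this
  have hq1u : ⟪v₁, y⟫ ≤ 1 := by
    have := real_inner_le_norm v₁ y; rwa [h1, hy, one_mul] at this
  have hq2u : ⟪v₂, y⟫ ≤ 1 := by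
    have := real_inner_le_norm v₂ y; rwa [h2, hy, one_mul] at this
  have hq3u : ⟪v₃, y⟫ ≤ 1 := by
    have := real_inner_le_norm v₃ y; rwa [h3, hy, one_mul] at this
  rw [hxy]
  exact reuleaux_core_alg c (a 0) (a 1) (a 2) ⟪v₁, x⟫ ⟪v₂, x⟫ ⟪v₃, x⟫ ⟪v₁, y⟫ ⟪v₂, y⟫ ⟪v₃, y⟫
    hc0 hc1 hp1d hp2d hp3d hp1 hp2 hp3 hp1u hp2u hp3u hq1 hq2 hq3 hq1u hq2u hq3u hnorm

theorem reuleaux_constant_width (r : ℝ) (hr : 0 < r) (hr2 : r ≤ π / 2)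
    (v₁ v₂ v₃ : EuclideanSpace ℝ (Fin 3))
    (h1 : ‖v₁‖ = 1) (h2 : ‖v₂‖ = 1) (h3 : ‖v₃‖ = 1)
    (h12 : sdist v₁ v₂ = r) (h13 : sdist v₁ v₃ = r) (h23 : sdist v₂ v₃ = r) :
    sdiam (sball v₁ r ∩ sball v₂ r ∩ sball v₃ r) = r ∧
    sball v₁ r ∩ sball v₂ r ∩ sball v₃ r =
      sdual r (sball v₁ r ∩ sball v₂ r ∩ sball v₃ r) := by
  have hπ : (0:ℝ) < π := Real.pi_pos
  have hrπ : r ≤ π := by linarith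
  set c := Real.cos r with hc
  have hc0 : 0 ≤ c := Real.cos_nonneg_of_mem_Icc ⟨by linarith, hr2⟩
  have hc1 : c < 1 := by
    have := Real.strictAntiOn_cos ⟨le_refl 0, hπ.le⟩ ⟨hr.le, hrπ⟩ hr
    rwa [Real.cos_zero] at this
  -- inner products of the vertices
  have inner_eq : ∀ (u w : EuclideanSpace ℝ (Fin 3)), ‖u‖ = 1 → ‖w‖ = 1 →
      sdist u w = r → ⟪u, w⟫ = c := by
    intro u w hu hw hd
    have hb : |⟪u, w⟫| ≤ 1 := by
      have := abs_real_inner_le_norm u w; rwa [hu, hw, one_mul] at this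
    rw [abs_le] at hb
    have : Real.cos (sdist u w) = ⟪u, w⟫ := Real.cos_arccos hb.1 hb.2
    rw [hd] at this; rw [← this]
  have g12 : ⟪v₁, v₂⟫ = c := inner_eq v₁ v₂ h1 h2 h12
  have g13 : ⟪v₁, v₃⟫ = c := inner_eq v₁ v₃ h1 h3 h13
  have g23 : ⟪v₂, v₃⟫ = c := inner_eq v₂ v₃ h2 h3 h23
  -- characterization of sdist ≤ r for unit vectors
  have sdist_le_iff : ∀ (u w : EuclideanSpace ℝ (Fin 3)), ‖u‖ = 1 → ‖w‖ = 1 →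
      (sdist u w ≤ r ↔ c ≤ ⟪u, w⟫) := by
    intro u w hu hw
    have hb : |⟪u, w⟫| ≤ 1 := by
      have := abs_real_inner_le_norm u w; rwa [hu, hw, one_mul] at this
    rw [abs_le] at hb
    constructor
    · intro h
      have : Real.cos r ≤ Real.cos (sdist u w) :=
        Real.cos_le_cos_of_nonneg_of_le_pi (Real.arccos_nonneg _) hrπ h
      rwa [show Real.cos (sdist u w) = ⟪u, w⟫ from Real.cos_arccos hb.1 hb.2] at this
    · intro h
      have h' : Real.arccos ⟪u, w⟫ ≤ Real.arccos (Real.cos r) := by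
        rcases eq_or_lt_of_le h with h'' | h''
        · rw [← h'']
        · exact le_of_lt (Real.strictAntiOn_arccos ⟨by linarith [Real.neg_one_le_cos r],
            Real.cos_le_one r⟩ ⟨hb.1, hb.2⟩ h'')
      rwa [Real.arccos_cos hr.le hrπ] at h'
  set Δ := sball v₁ r ∩ sball v₂ r ∩ sball v₃ r with hΔ
  -- membership characterization
  have hmem : ∀ z, z ∈ Δ ↔ (‖z‖ = 1 ∧ c ≤ ⟪v₁, z⟫ ∧ c ≤ ⟪v₂, z⟫ ∧ c ≤ ⟪v₃, z⟫) := by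
    intro z
    constructor
    · rintro ⟨⟨⟨hz1, hd1⟩, ⟨hz2, hd2⟩⟩, ⟨hz3, hd3⟩⟩
      exact ⟨hz1, (sdist_le_iff v₁ z h1 hz1).1 hd1, (sdist_le_iff v₂ z h2 hz2).1 hd2,
        (sdist_le_iff v₃ z h3 hz3).1 hd3⟩
    · rintro ⟨hz, hi1, hi2, hi3⟩
      exact ⟨⟨⟨hz, (sdist_le_iff v₁ z h1 hz).2 hi1⟩, ⟨hz, (sdist_le_iff v₂ z h2 hz).2 hi2⟩⟩,
        ⟨hz, (sdist_le_iff v₃ z h3 hz).2 hi3⟩⟩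
  have g11 : ⟪v₁, v₁⟫ = 1 := by rw [real_inner_self_eq_norm_mul_norm, h1]; norm_num
  have g22 : ⟪v₂, v₂⟫ = 1 := by rw [real_inner_self_eq_norm_mul_norm, h2]; norm_num
  have g33 : ⟪v₃, v₃⟫ = 1 := by rw [real_inner_self_eq_norm_mul_norm, h3]; norm_num
  have g21 : ⟪v₂, v₁⟫ = c := by rw [real_inner_comm]; exact g12
  have g31 : ⟪v₃, v₁⟫ = c := by rw [real_inner_comm]; exact g13
  have g32 : ⟪v₃, v₂⟫ = c := by rw [real_inner_comm]; exact g23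
  -- the vertices belong to Δ
  have hv1 : v₁ ∈ Δ := (hmem v₁).2 ⟨h1, by rw [g11]; exact hc1.le, by rw [g21],
    by rw [g31]⟩
  have hv2 : v₂ ∈ Δ := (hmem v₂).2 ⟨h2, by rw [g12], by rw [g22]; exact hc1.le,
    by rw [g32]⟩
  -- any two points of Δ are at spherical distance at most r
  have hkey : ∀ x ∈ Δ, ∀ y ∈ Δ, sdist x y ≤ r := by
    intro x hxΔ y hyΔ
    obtain ⟨hx, hp1, hp2, hp3⟩ := (hmem x).1 hxΔ
    obtain ⟨hy', hq1, hq2, hq3⟩ := (hmem y).1 hyΔ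
    exact (sdist_le_iff x y hx hy').2
      (reuleaux_key c hc0 hc1 v₁ v₂ v₃ x y h1 h2 h3 g12 g13 g23 hx hy' hp1 hp2 hp3 hq1 hq2 hq3)
  constructor
  · -- sdiam Δ = r
    apply le_antisymm
    · apply Real.sSup_le
      · rintro δ ⟨x, hxΔ, y, hyΔ, rfl⟩
        exact hkey x hxΔ y hyΔ
      · exact hr.le
    · apply le_csSup
      · exact ⟨r, fun δ hδ => by obtain ⟨x, hxΔ, y, hyΔ, rfl⟩ := hδ; exact hkey x hxΔ y hyΔ⟩
      · exact ⟨v₁, hv1, v₂, hv2, h12.symm⟩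
  · -- Δ = Δ^r
    ext z
    constructor
    · intro hz
      refine ⟨((hmem z).1 hz).1, fun x hxΔ => hkey x hxΔ z hz⟩
    · rintro ⟨hz, hzall⟩
      refine (hmem z).2 ⟨hz, ?_, ?_, ?_⟩
      · have := hzall v₁ hv1
        exact (sdist_le_iff v₁ z h1 hz).1 this
      · have := hzall v₂ hv2
        exact (sdist_le_iff v₂ z h2 hz).1 this
      · have hv3 : v₃ ∈ Δ := (hmem v₃).2 ⟨h3, by rw [g13], by rw [g23],
          by rw [g33]; exact hc1.le⟩
        have := hzall v₃ hv3
        exact (sdist_le_iff v₃ z h3 hz).1 this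
end
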